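/- Let F = ℂ⟨α, β⟩ and γ the swap automorphism. The fixed subalgebra F^{ℤ/2} requires, for each n ≥ 2, at least one generator of degree n in any homogeneous generating set; in particular, the minimal number of generators of F^{ℤ/2} in degrees ≤ N grows at least linearly in N. -/

import Mathlib

/-! Put `x = α + β` and `y = α - β`: the swap fixes `x` and negates `y`, so for `n ≥ 2` the
element `y x^(n-2) y` is fixed, yet it is not a sum of products of fixed elements of positive
degree, because none of its proper nonempty prefixes contains an even number of `y`s.

Concretely, the coefficient of a word of length `n` in `y x^(n-2) y` is `±1` according to whether
its first and last letters agree. The resulting functional `endSignFunctional n` changes sign when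
the swap is applied to the left factor of a product of two words of positive length, so it kills
`a * b` whenever `a` is fixed and `a`, `b` are homogeneous of positive degree. Hence it vanishes on
the algebra generated by fixed homogeneous elements none of which has degree `n`, whereas it takes
the value `2` on the fixed element `α^n + β^n`. As the homogeneous components are independent, the
generators found in degrees `2, …, N` are pairwise distinct. -/

/-- The swap automorphism of `F = ℂ⟨α, β⟩`. -/
noncomputable def swapAlg : FreeAlgebra ℂ (Fin 2) →ₐ[ℂ] FreeAlgebra ℂ (Fin 2) :=
  FreeAlgebra.lift ℂ fun i => FreeAlgebra.ι ℂ (1 - i)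

/-- Interpretation of a word as a product of generators. -/
noncomputable def wordToAlg : FreeMonoid (Fin 2) →* FreeAlgebra ℂ (Fin 2) :=
  FreeMonoid.lift (FreeAlgebra.ι ℂ)

/-- The degree-`n` homogeneous component of `ℂ⟨α, β⟩` (span of the words of length `n`). -/
noncomputable def degComp (n : ℕ) : Submodule ℂ (FreeAlgebra ℂ (Fin 2)) :=
  Submodule.span ℂ
    {x | ∃ w : FreeMonoid (Fin 2), (FreeMonoid.toList w).length = n ∧ x = wordToAlg w}

noncomputable def wordCoeff : FreeAlgebra ℂ (Fin 2) →ₗ[ℂ] FreeMonoid (Fin 2) →₀ ℂ :=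
  (MonoidAlgebra.coeffLinearEquiv ℂ).toLinearMap ∘ₗ
    FreeAlgebra.equivMonoidAlgebraFreeMonoid.toLinearMap

lemma wordCoeff_injective : Function.Injective wordCoeff :=
  (FreeAlgebra.equivMonoidAlgebraFreeMonoid.toLinearEquiv.trans
    (MonoidAlgebra.coeffLinearEquiv ℂ)).injective

lemma wordCoeff_wordToAlg (w : FreeMonoid (Fin 2)) :
    wordCoeff (wordToAlg w) = Finsupp.single w 1 := by
  have : (FreeAlgebra.equivMonoidAlgebraFreeMonoid (R := ℂ) (X := Fin 2)).toMonoidHom.comp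
      wordToAlg = MonoidAlgebra.of ℂ (FreeMonoid (Fin 2)) :=
    FreeMonoid.hom_eq fun x => by simp [wordToAlg, FreeAlgebra.equivMonoidAlgebraFreeMonoid]
  have hw : FreeAlgebra.equivMonoidAlgebraFreeMonoid (wordToAlg w) =
      MonoidAlgebra.of ℂ (FreeMonoid (Fin 2)) w := DFunLike.congr_fun this w
  simp [wordCoeff, hw]

lemma swapAlg_wordToAlg (w : FreeMonoid (Fin 2)) :
    swapAlg (wordToAlg w) = wordToAlg (FreeMonoid.map (1 - ·) w) := by
  have : swapAlg.toMonoidHom.comp wordToAlg = wordToAlg.comp (FreeMonoid.map (1 - ·)) :=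
    FreeMonoid.hom_eq fun x => by simp [wordToAlg, swapAlg]
  exact DFunLike.congr_fun this w

lemma degComp_mul_le (i j : ℕ) : degComp i * degComp j ≤ degComp (i + j) := by
  rw [degComp, degComp, Submodule.span_mul_span]
  apply Submodule.span_mono
  rintro _ ⟨_, ⟨u, hu, rfl⟩, _, ⟨v, hv, rfl⟩, rfl⟩
  exact ⟨u * v, by simp [hu, hv], (map_mul _ _ _).symm⟩

lemma degComp_zero : degComp 0 = 1 := by
  rw [degComp, Submodule.one_eq_span]
  congr
  ext x
  constructor
  · rintro ⟨w, hw, rfl⟩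
    rw [FreeMonoid.length_eq_zero.mp hw, map_one]
    rfl
  · rintro rfl
    exact ⟨1, rfl, (map_one _).symm⟩

lemma wordCoeff_mem_supported {i : ℕ} {x : FreeAlgebra ℂ (Fin 2)} (hx : x ∈ degComp i) :
    wordCoeff x ∈ Finsupp.supported ℂ ℂ {w : FreeMonoid (Fin 2) | w.toList.length = i} := by
  refine (Submodule.span_le (p := (Finsupp.supported ℂ ℂ _).comap wordCoeff)).mpr ?_ hx
  rintro _ ⟨w, hw, rfl⟩
  simp [wordCoeff_wordToAlg, Finsupp.single_mem_supported, hw]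

lemma eq_zero_of_mem_degComp_of_mem_degComp {i j : ℕ} (hij : i ≠ j)
    {x : FreeAlgebra ℂ (Fin 2)} (hi : x ∈ degComp i) (hj : x ∈ degComp j) : x = 0 := by
  have hx := Submodule.mem_inf.mpr ⟨wordCoeff_mem_supported hi, wordCoeff_mem_supported hj⟩
  have hempty :
      {w : FreeMonoid (Fin 2) | w.toList.length = i} ∩ {w | w.toList.length = j} = ∅ :=
    Set.eq_empty_of_forall_notMem fun w ⟨hwi, hwj⟩ => hij (hwi.symm.trans hwj)
  rw [← Finsupp.supported_inter, hempty, Finsupp.supported_empty] at hx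
  exact wordCoeff_injective (by simpa using hx)

def endSign (l : List (Fin 2)) : ℂ := if l.head? = l.getLast? then 1 else -1

lemma endSign_map_swap_append {u v : List (Fin 2)} (hu : u ≠ []) (hv : v ≠ []) :
    endSign (u.map (1 - ·) ++ v) = -endSign (u ++ v) := by
  obtain ⟨a, u, rfl⟩ := List.exists_cons_of_ne_nil hu
  obtain ⟨b, hb⟩ := Option.ne_none_iff_exists'.mp (mt List.getLast?_eq_none_iff.mp hv)
  rw [endSign, endSign, List.getLast?_append_of_ne_nil _ hv, List.getLast?_append_of_ne_nil _ hv,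
    hb]
  fin_cases a <;> fin_cases b <;> simp

lemma endSign_replicate (n : ℕ) (a : Fin 2) : endSign (List.replicate n a) = 1 := by
  simp [endSign, List.head?_replicate, List.getLast?_replicate]

noncomputable def endSignFunctional (n : ℕ) : FreeAlgebra ℂ (Fin 2) →ₗ[ℂ] ℂ :=
  Finsupp.linearCombination ℂ
    (fun w : FreeMonoid (Fin 2) => if w.toList.length = n then endSign w.toList else 0) ∘ₗ
    wordCoeff

lemma endSignFunctional_wordToAlg (n : ℕ) (w : FreeMonoid (Fin 2)) :
    endSignFunctional n (wordToAlg w) = if w.toList.length = n then endSign w.toList else 0 := by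
  simp [endSignFunctional, wordCoeff_wordToAlg]

lemma endSignFunctional_eq_zero_of_mem_degComp {n i : ℕ} (hin : i ≠ n)
    {x : FreeAlgebra ℂ (Fin 2)} (hx : x ∈ degComp i) : endSignFunctional n x = 0 := by
  refine (Submodule.span_le (p := LinearMap.ker (endSignFunctional n))).mpr ?_ hx
  rintro _ ⟨w, hw, rfl⟩
  simp [endSignFunctional_wordToAlg, hw, hin]

lemma endSignFunctional_swap_mul_wordToAlg (n : ℕ) {u v : FreeMonoid (Fin 2)}
    (hu : u ≠ 1) (hv : v ≠ 1) :
    endSignFunctional n (wordToAlg (FreeMonoid.map (1 - ·) u * v)) =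
      -endSignFunctional n (wordToAlg (u * v)) := by
  have hu' : u.toList ≠ [] := fun h => hu (FreeMonoid.toList.injective h)
  have hv' : v.toList ≠ [] := fun h => hv (FreeMonoid.toList.injective h)
  simp only [endSignFunctional_wordToAlg, FreeMonoid.toList_mul, FreeMonoid.toList_map,
    List.length_append, List.length_map, endSign_map_swap_append hu' hv']
  split_ifs <;> simp

lemma endSignFunctional_swapAlg_mul (n : ℕ) {i j : ℕ} (hi : i ≠ 0) (hj : j ≠ 0)
    {a b : FreeAlgebra ℂ (Fin 2)} (ha : a ∈ degComp i) (hb : b ∈ degComp j) :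
    endSignFunctional n (swapAlg a * b) = -endSignFunctional n (a * b) := by
  induction ha, hb using Submodule.span_induction₂ with
  | mem_mem a b ha hb =>
    obtain ⟨u, hu, rfl⟩ := ha
    obtain ⟨v, hv, rfl⟩ := hb
    rw [swapAlg_wordToAlg, ← map_mul, ← map_mul]
    exact endSignFunctional_swap_mul_wordToAlg n (by rintro rfl; exact hi hu.symm)
      (by rintro rfl; exact hj hv.symm)
  | zero_left => simp
  | zero_right => simp
  | add_left x y z _ _ _ hx hy => simp [add_mul, hx, hy, add_comm]
  | add_right x y z _ _ _ hy hz => simp [mul_add, hy, hz, add_comm]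
  | smul_left c x y _ _ h => simp [h]
  | smul_right c x y _ _ h => simp [h]

lemma endSignFunctional_mul_eq_zero {n i j : ℕ} {a b : FreeAlgebra ℂ (Fin 2)}
    (ha : a ∈ degComp i) (hb : b ∈ degComp j) (ha_fix : swapAlg a = a)
    (ha_zero : endSignFunctional n a = 0) (hb_zero : endSignFunctional n b = 0) :
    endSignFunctional n (a * b) = 0 := by
  rcases eq_or_ne i 0 with rfl | hi
  · rw [degComp_zero] at ha
    obtain ⟨c, rfl⟩ := Submodule.mem_one.mp ha
    rw [← Algebra.smul_def, map_smul, hb_zero, smul_zero]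
  rcases eq_or_ne j 0 with rfl | hj
  · rw [degComp_zero] at hb
    obtain ⟨c, rfl⟩ := Submodule.mem_one.mp hb
    rw [← Algebra.commutes, ← Algebra.smul_def, map_smul, ha_zero, smul_zero]
  have h := endSignFunctional_swapAlg_mul n hi hj ha hb
  rw [ha_fix] at h
  exact CharZero.eq_neg_self_iff.mp h

lemma endSignFunctional_eq_zero_of_mem_adjoin {n : ℕ} (hn : n ≠ 0)
    {T : Set (FreeAlgebra ℂ (Fin 2))} (hfix : ∀ x ∈ T, swapAlg x = x)
    (hhom : ∀ x ∈ T, ∃ i, x ∈ degComp i) (hT : ∀ x ∈ T, x ∈ degComp n → x = 0)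
    {x : FreeAlgebra ℂ (Fin 2)} (hx : x ∈ Algebra.adjoin ℂ T) :
    endSignFunctional n x = 0 := by
  have hclosure (m) (hm : m ∈ Submonoid.closure T) :
      swapAlg m = m ∧ (∃ i, m ∈ degComp i) ∧ endSignFunctional n m = 0 := by
    induction hm using Submonoid.closure_induction with
    | mem t ht =>
      obtain ⟨i, hi⟩ := hhom t ht
      refine ⟨hfix t ht, ⟨i, hi⟩, ?_⟩
      rcases eq_or_ne i n with rfl | hin
      · rw [hT t ht hi, map_zero]
      · exact endSignFunctional_eq_zero_of_mem_degComp hin hi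
    | one =>
      have h1 : (1 : FreeAlgebra ℂ (Fin 2)) ∈ degComp 0 :=
        degComp_zero ▸ Submodule.one_le.mp le_rfl
      exact ⟨map_one _, ⟨0, h1⟩, endSignFunctional_eq_zero_of_mem_degComp hn.symm h1⟩
    | mul a b _ _ ha hb =>
      obtain ⟨ha_fix, ⟨i, hai⟩, ha_zero⟩ := ha
      obtain ⟨hb_fix, ⟨j, hbj⟩, hb_zero⟩ := hb
      exact ⟨by rw [map_mul, ha_fix, hb_fix],
        ⟨i + j, degComp_mul_le i j (Submodule.mul_mem_mul hai hbj)⟩,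
        endSignFunctional_mul_eq_zero hai hbj ha_fix ha_zero hb_zero⟩
  rw [← Subalgebra.mem_toSubmodule, Algebra.adjoin_eq_span] at hx
  exact (Submodule.span_le (p := LinearMap.ker (endSignFunctional n))).mpr
    (fun m hm => (hclosure m hm).2.2) hx

lemma FreeMonoid.toList_of_pow {α : Type*} (a : α) (n : ℕ) :
    (FreeMonoid.of a ^ n).toList = List.replicate n a := by
  induction n with
  | zero => rfl
  | succ n ih =>
    rw [pow_succ, FreeMonoid.toList_mul, ih, FreeMonoid.toList_of, List.replicate_succ']

noncomputable def powerSum (n : ℕ) : FreeAlgebra ℂ (Fin 2) :=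
  FreeAlgebra.ι ℂ 0 ^ n + FreeAlgebra.ι ℂ 1 ^ n

lemma swapAlg_powerSum (n : ℕ) : swapAlg (powerSum n) = powerSum n := by
  simp [powerSum, swapAlg, add_comm]

lemma endSignFunctional_powerSum (n : ℕ) : endSignFunctional n (powerSum n) = 2 := by
  have h (a : Fin 2) : FreeAlgebra.ι ℂ a ^ n = wordToAlg (FreeMonoid.of a ^ n) := by
    simp [wordToAlg]
  simp only [powerSum, h, map_add, endSignFunctional_wordToAlg, FreeMonoid.toList_of_pow,
    List.length_replicate, endSign_replicate]
  norm_num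

theorem exists_ne_zero_mem_degComp {T : Set (FreeAlgebra ℂ (Fin 2))}
    (hfix : ∀ x ∈ T, swapAlg x = x) (hhom : ∀ x ∈ T, ∃ i, x ∈ degComp i)
    (hgen : Algebra.adjoin ℂ T =
      AlgHom.equalizer swapAlg (AlgHom.id ℂ (FreeAlgebra ℂ (Fin 2))))
    {n : ℕ} (hn : n ≠ 0) : ∃ x ∈ T, x ≠ 0 ∧ x ∈ degComp n := by
  by_contra! hT
  have hmem : powerSum n ∈ Algebra.adjoin ℂ T := hgen ▸ swapAlg_powerSum n
  have h := endSignFunctional_eq_zero_of_mem_adjoin hn hfix hhom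
    (fun x hx hxn => by_contra fun h0 => hT x hx h0 hxn) hmem
  rw [endSignFunctional_powerSum] at h
  exact two_ne_zero h

lemma Set.ncard_le_ncard_of_forall_exists {α β : Type*} {s : Set α} {t : Set β}
    (R : α → β → Prop) (h : ∀ a ∈ s, ∃ b ∈ t, R a b)
    (hR : ∀ a a' b, R a b → R a' b → a = a')
    (ht : t.Finite) : s.ncard ≤ t.ncard := by
  rcases s.eq_empty_or_nonempty with rfl | ⟨a, ha⟩
  · simp
  have : Nonempty β := let ⟨b, _⟩ := h a ha; ⟨b⟩
  choose! f hft hfR using h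
  exact Set.ncard_le_ncard_of_injOn f hft (fun a ha a' ha' he => hR a a' (f a) (hfR a ha)
    (he ▸ hfR a' ha')) ht

/-- Any homogeneous generating set of the fixed subalgebra `F^{ℤ/2}` contains, for each
`n ≥ 2`, a nonzero generator of degree `n`; in particular the number of generators in
degrees `≤ N` grows at least linearly in `N`. -/
theorem stmt10 (T : Set (FreeAlgebra ℂ (Fin 2)))
    (hfix : ∀ x ∈ T, swapAlg x = x)
    (hhom : ∀ x ∈ T, ∃ i, x ∈ degComp i)
    (hgen : Algebra.adjoin ℂ T =
      AlgHom.equalizer swapAlg (AlgHom.id ℂ (FreeAlgebra ℂ (Fin 2)))) :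
    (∀ n, 2 ≤ n → ∃ x ∈ T, x ≠ 0 ∧ x ∈ degComp n) ∧
    (∀ N, 2 ≤ N →
      N - 1 ≤ {x ∈ T | x ≠ 0 ∧ ∃ i, 2 ≤ i ∧ i ≤ N ∧ x ∈ degComp i}.ncard ∨
      {x ∈ T | x ≠ 0 ∧ ∃ i, 2 ≤ i ∧ i ≤ N ∧ x ∈ degComp i}.Infinite) := by
  have hgenerator (n : ℕ) (hn : 2 ≤ n) : ∃ x ∈ T, x ≠ 0 ∧ x ∈ degComp n :=
    exists_ne_zero_mem_degComp hfix hhom hgen (by omega)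
  refine ⟨hgenerator, fun N _ => or_iff_not_imp_right.mpr fun hfin => ?_⟩
  calc N - 1 = (Set.Icc 2 N).ncard := by simp
    _ ≤ _ := Set.ncard_le_ncard_of_forall_exists (fun n x => x ≠ 0 ∧ x ∈ degComp n)
      (fun n hn => by
        obtain ⟨x, hxT, hx0, hxn⟩ := hgenerator n hn.1
        exact ⟨x, ⟨hxT, hx0, n, hn.1, hn.2, hxn⟩, hx0, hxn⟩)
      (fun n n' x ⟨hx0, hxn⟩ ⟨_, hxn'⟩ =>
        by_contra fun hne => hx0 (eq_zero_of_mem_degComp_of_mem_degComp hne hxn hxn'))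
      (Set.not_infinite.mp hfin)
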